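/- If a predicate is well-moded with respect to mode interpretations MI₁ and MI₂ (each a ⊒-model such that whenever the head of a head grounding has value t, no disjunct of the body has value i), then it is well-moded with respect to MI₁ ⊓ MI₂. -/

import Mathlib

set_option linter.unusedVariables false

inductive Four : Type where
  | u | f | t | i
deriving DecidableEq, Repr

instance : Fintype Four :=
  ⟨{Four.u, Four.f, Four.t, Four.i}, fun x => by cases x <;> simp⟩

namespace Four

/-- The truth ordering on FOUR: `f` bottom, `t` top, `u` and `i` incomparable. -/
def tle : Four → Four → Prop := fun x y => x = f ∨ y = t ∨ x = y

/-- The information ordering on FOUR: `u` bottom, `i` top, `f` and `t` incomparable. -/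
def sq : Four → Four → Prop := fun x y => x = u ∨ y = i ∨ x = y

instance : DecidableRel tle := fun x y => by unfold tle; infer_instance
instance : DecidableRel sq := fun x y => by unfold sq; infer_instance

/-- Belnap conjunction: meet in the truth ordering. -/
def tand : Four → Four → Four
  | f, _ => f
  | _, f => f
  | t, y => y
  | x, t => x
  | u, u => u
  | i, i => i
  | u, i => f
  | i, u => f

/-- Belnap disjunction: join in the truth ordering. -/
def tor : Four → Four → Four
  | t, _ => t
  | _, t => t
  | f, y => y
  | x, f => x
  | u, u => u
  | i, i => i
  | u, i => t
  | i, u => t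

/-- Consensus: meet in the information ordering. -/
def imeet : Four → Four → Four
  | u, _ => u
  | _, u => u
  | i, y => y
  | x, i => x
  | f, f => f
  | t, t => t
  | f, t => u
  | t, f => u

/-- Gullibility: join in the information ordering. -/
def ijoin : Four → Four → Four
  | i, _ => i
  | _, i => i
  | u, y => y
  | x, u => x
  | f, f => f
  | t, t => t
  | f, t => i
  | t, f => i

/-- Belnap negation. -/
def neg : Four → Four
  | u => u
  | f => t
  | t => f
  | i => i

end Four

open Four

/-- The information ordering as the order on FOUR. -/
instance : PartialOrder Four where
  le := sq
  le_refl := (by decide : ∀ a : Four, sq a a)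
  le_trans := (by decide : ∀ a b c : Four, sq a b → sq b c → sq a c)
  le_antisymm := (by decide : ∀ a b : Four, sq a b → sq b a → a = b)

instance : Lattice Four where
  inf := imeet
  sup := ijoin
  le_sup_left := (by decide : ∀ a b : Four, sq a (ijoin a b))
  le_sup_right := (by decide : ∀ a b : Four, sq b (ijoin a b))
  sup_le := (by decide : ∀ a b c : Four, sq a c → sq b c → sq (ijoin a b) c)
  inf_le_left := (by decide : ∀ a b : Four, sq (imeet a b) a)
  inf_le_right := (by decide : ∀ a b : Four, sq (imeet a b) b)
  le_inf := (by decide : ∀ a b c : Four, sq a b → sq a c → sq a (imeet b c))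

instance : BoundedOrder Four where
  top := .i
  le_top := (by decide : ∀ a : Four, sq a .i)
  bot := .u
  bot_le := (by decide : ∀ a : Four, sq .u a)

noncomputable instance : CompleteLattice Four := Fintype.toCompleteLattice Four

theorem Monotone.map_inf_le_inf {α : Type*} [SemilatticeInf α] {f : α → α} (hf : Monotone f)
    {a b : α} (ha : f a ≤ a) (hb : f b ≤ b) : f (a ⊓ b) ≤ a ⊓ b :=
  le_inf ((hf inf_le_left).trans ha) ((hf inf_le_right).trans hb)

namespace Four

theorem eq_t_or_eq_t_of_inf_eq_t : ∀ {a b : Four}, a ⊓ b = t → a = t ∨ b = t := by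
  decide

end Four

section WellModed

variable {G γ : Type*} {k : γ → ℕ}

def WellModed (Φ : (G → Four) →o (G → Four)) (H : γ → G)
    (C : (g : γ) → Fin (k g) → (G → Four) → Four) (M : G → Four) : Prop :=
  Φ M ≤ M ∧ ∀ g, M (H g) = .t → ∀ j, C g j M ≠ .i

theorem WellModed.inf {Φ : (G → Four) →o (G → Four)} {H : γ → G}
    {C : (g : γ) → Fin (k g) → (G → Four) → Four} (hC : ∀ g j, Monotone (C g j))
    {M₁ M₂ : G → Four} (h₁ : WellModed Φ H C M₁) (h₂ : WellModed Φ H C M₂) :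
    WellModed Φ H C (M₁ ⊓ M₂) := by
  refine ⟨Φ.monotone.map_inf_le_inf h₁.1 h₂.1, fun g hg j => ?_⟩
  -- `i` is `⊤` of the information order, and `C g j` can only drop below its value at `Mₖ`.
  rcases Four.eq_t_or_eq_t_of_inf_eq_t hg with hg₁ | hg₂
  · exact ne_top_of_le_ne_top (h₁.2 g hg₁ j) (hC g j inf_le_left)
  · exact ne_top_of_le_ne_top (h₂.2 g hg₂ j) (hC g j inf_le_right)

end WellModed

/-- well-modedness is preserved under the meet of mode interpretations.
Interpretations map ground atoms `G` to FOUR, ordered pointwise by the information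
ordering.  `Φ` is the (monotone) immediate consequence operator; `g` ranges over head
groundings, with head atom `H g` and disjunct evaluation functions `C g j` (monotone in
the interpretation, as formula evaluation is).  If the program is well-moded w.r.t.
`M₁` and w.r.t. `M₂` — each is a `⊒`-model, and whenever the head has value `t` no
disjunct of the body has value `i` — then it is well-moded w.r.t. `M₁ ⊓ M₂`. -/
theorem well_moded_meet {G γ : Type*} (Φ : (G → Four) →o (G → Four))
    (H : γ → G) (k : γ → ℕ) (C : (g : γ) → Fin (k g) → (G → Four) → Four)
    (hC : ∀ g j, Monotone (C g j))
    (M₁ M₂ : G → Four)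
    (hmod₁ : Φ M₁ ≤ M₁) (hmod₂ : Φ M₂ ≤ M₂)
    (hwm₁ : ∀ g, M₁ (H g) = .t → ∀ j, C g j M₁ ≠ .i)
    (hwm₂ : ∀ g, M₂ (H g) = .t → ∀ j, C g j M₂ ≠ .i) :
    Φ (M₁ ⊓ M₂) ≤ M₁ ⊓ M₂ ∧
    (∀ g, (M₁ ⊓ M₂) (H g) = .t → ∀ j, C g j (M₁ ⊓ M₂) ≠ .i) :=
  WellModed.inf hC ⟨hmod₁, hwm₁⟩ ⟨hmod₂, hwm₂⟩
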